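/- arXiv:1502.05126 — 6 statements merged into one kernel-verified Lean document; each statement's English description precedes it below -/
import Mathlib

section
/- For real b and 0 < r < 1 with Δ = 1 + b²(1 - r²), and with x₁ = (b²r + √Δ)/(1+b²) and corresponding sine y₁ = (b√Δ - br)/(1+b²), one has -log(1 + r² - 2r x₁) + 2b·arctan(r y₁/(1 - r x₁)) = log(1+b²) - 2 log(√Δ - r) + 2b·arctan(b r/√Δ). -/
theorem phi_at_theta1 (b r : ℝ) (hr0 : 0 < r) (hr1 : r < 1)
    (Δ x₁ y₁ : ℝ)
    (hΔ : Δ = 1 + b ^ 2 * (1 - r ^ 2))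
    (hx : x₁ = (b ^ 2 * r + Real.sqrt Δ) / (1 + b ^ 2))
    (hy : y₁ = (b * Real.sqrt Δ - b * r) / (1 + b ^ 2)) :
    -Real.log (1 + r ^ 2 - 2 * r * x₁) + 2 * b * Real.arctan (r * y₁ / (1 - r * x₁))
      = Real.log (1 + b ^ 2) - 2 * Real.log (Real.sqrt Δ - r)
        + 2 * b * Real.arctan (b * r / Real.sqrt Δ) := by
  set s := Real.sqrt Δ with hs
  have h1r : (0:ℝ) < 1 - r ^ 2 := by nlinarith
  have hΔpos : 0 < Δ := by rw [hΔ]; nlinarith [mul_nonneg (sq_nonneg b) h1r.le]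
  have hs2 : s ^ 2 = Δ := Real.sq_sqrt hΔpos.le
  have hs0 : 0 < s := Real.sqrt_pos.mpr hΔpos
  have hsr : r < s := by
    nlinarith [hs2, hΔ, mul_nonneg (sq_nonneg b) h1r.le, mul_pos hs0 hr0, sq_nonneg (s - r), sq_nonneg (s + r)]
  have hb2 : (0:ℝ) < 1 + b ^ 2 := by positivity
  have h1 : 1 + r ^ 2 - 2 * r * x₁ = (s - r) ^ 2 / (1 + b ^ 2) := by
    rw [hx]; field_simp; nlinarith [hs2]
  have h2 : r * y₁ / (1 - r * x₁) = b * r / s := by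
    have hden : 1 - r * x₁ = s * (s - r) / (1 + b ^ 2) := by
      rw [hx]; field_simp; nlinarith [hs2]
    have hsr0 : s - r ≠ 0 := sub_ne_zero.mpr hsr.ne'
    rw [hy, hden]
    field_simp
  rw [h1, h2, Real.log_div (pow_ne_zero 2 (sub_ne_zero.mpr hsr.ne')) hb2.ne', Real.log_pow]
  push_cast
  ring
end

section
/- Fix 0 < r < 1 and define Φ⁺(b) = log(1+b²) - 2 log(√(1 + b²(1-r²)) - r) + 2b·arctan(br/√(1 + b²(1-r²))). Then Φ⁺ is monotone increasing on [0,∞) and monotone decreasing on (-∞,0]; in particular Φ⁺(b) ≥ Φ⁺(0) = -2 log(1-r) for all b ∈ ℝ. -/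
open Real Set

lemma phi_deriv (r : ℝ) (hr0 : 0 < r) (hr1 : r < 1) (b : ℝ) :
    HasDerivAt (fun x : ℝ => Real.log (1 + x ^ 2)
        - 2 * Real.log (Real.sqrt (1 + x ^ 2 * (1 - r ^ 2)) - r)
        + 2 * x * Real.arctan (x * r / Real.sqrt (1 + x ^ 2 * (1 - r ^ 2))))
      (2 * Real.arctan (b * r / Real.sqrt (1 + b ^ 2 * (1 - r ^ 2)))) b := by
  have hcpos : 0 < 1 - r ^ 2 := by nlinarith
  set c := 1 - r ^ 2 with hc
  have hb2 : (0:ℝ) < 1 + b ^ 2 := by positivity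
  set s := Real.sqrt (1 + b ^ 2 * c) with hsdef
  have hargpos : (0:ℝ) < 1 + b ^ 2 * c := by positivity
  have hs1 : 1 ≤ s := by
    rw [hsdef]
    exact Real.one_le_sqrt.mpr (by nlinarith [sq_nonneg b])
  have hs0 : 0 < s := lt_of_lt_of_le one_pos hs1
  have hssq : s ^ 2 = 1 + b ^ 2 * c := Real.sq_sqrt hargpos.le
  have hsr : 0 < s - r := by linarith
  have hssq' : s ^ 2 = 1 + b ^ 2 * (1 - r ^ 2) := hssq
  have hq : HasDerivAt (fun x : ℝ => 1 + x ^ 2 * c) (2 * b * c) b := by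
    have h := ((hasDerivAt_pow 2 b).mul_const c).const_add 1
    simpa using h
  have hS : HasDerivAt (fun x : ℝ => Real.sqrt (1 + x ^ 2 * c)) (b * c / s) b := by
    have h := hq.sqrt hargpos.ne'
    convert h using 1
    field_simp
    ring
  have h1 : HasDerivAt (fun x : ℝ => Real.log (1 + x ^ 2)) (2 * b / (1 + b ^ 2)) b := by
    have h := ((hasDerivAt_pow 2 b).const_add 1).log hb2.ne'
    simpa using h
  have h2 : HasDerivAt (fun x : ℝ => Real.log (Real.sqrt (1 + x ^ 2 * c) - r))
      ((b * c / s) / (s - r)) b := (hS.sub_const r).log hsr.ne'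
  have hu : HasDerivAt (fun x : ℝ => x * r / Real.sqrt (1 + x ^ 2 * c))
      ((r * s - b * r * (b * c / s)) / s ^ 2) b := by
    have h := ((hasDerivAt_id b).mul_const r).div hS hs0.ne'
    simp only [id_eq, one_mul] at h
    exact h
  have harct : HasDerivAt (fun x : ℝ => Real.arctan (x * r / Real.sqrt (1 + x ^ 2 * c)))
      (1 / (1 + (b * r / s) ^ 2) * ((r * s - b * r * (b * c / s)) / s ^ 2)) b := hu.arctan
  have h3 : HasDerivAt (fun x : ℝ => 2 * x * Real.arctan (x * r / Real.sqrt (1 + x ^ 2 * c)))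
      (2 * 1 * Real.arctan (b * r / s) +
        2 * b * (1 / (1 + (b * r / s) ^ 2) * ((r * s - b * r * (b * c / s)) / s ^ 2))) b :=
    ((hasDerivAt_id b).const_mul 2).mul harct
  have hfull := (h1.sub (h2.const_mul 2)).add h3
  have hden : 1 + (b * r / s) ^ 2 = (1 + b ^ 2) / s ^ 2 := by
    field_simp
    linear_combination hssq
  have h4 : (r * s - b * r * (b * c / s)) / s ^ 2 = r / s ^ 3 := by
    field_simp
    linear_combination hssq'
  have key : 2 * b / (1 + b ^ 2) - 2 * (b * c / s / (s - r)) +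
      2 * b * (1 / (1 + (b * r / s) ^ 2) * ((r * s - b * r * (b * c / s)) / s ^ 2)) = 0 := by
    rw [hden, h4]
    field_simp
    ring_nf
    linear_combination 2 * b * hssq'
  exact hfull.congr_deriv (by linarith [key])

theorem phi_plus_monotone (r : ℝ) (hr0 : 0 < r) (hr1 : r < 1)
    (Φ : ℝ → ℝ)
    (hΦ : ∀ b : ℝ, Φ b = Real.log (1 + b ^ 2)
        - 2 * Real.log (Real.sqrt (1 + b ^ 2 * (1 - r ^ 2)) - r)
        + 2 * b * Real.arctan (b * r / Real.sqrt (1 + b ^ 2 * (1 - r ^ 2)))) :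
    MonotoneOn Φ (Set.Ici (0 : ℝ)) ∧ AntitoneOn Φ (Set.Iic (0 : ℝ)) ∧
      (∀ b : ℝ, Φ b ≥ Φ 0) ∧ Φ 0 = -2 * Real.log (1 - r) := by
  have hfun : Φ = fun x : ℝ => Real.log (1 + x ^ 2)
      - 2 * Real.log (Real.sqrt (1 + x ^ 2 * (1 - r ^ 2)) - r)
      + 2 * x * Real.arctan (x * r / Real.sqrt (1 + x ^ 2 * (1 - r ^ 2))) := funext hΦ
  have hD : ∀ b : ℝ, HasDerivAt Φ
      (2 * Real.arctan (b * r / Real.sqrt (1 + b ^ 2 * (1 - r ^ 2)))) b := by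
    intro b; rw [hfun]; exact phi_deriv r hr0 hr1 b
  have hcont : Continuous Φ := by
    have : Differentiable ℝ Φ := fun b => (hD b).differentiableAt
    exact this.continuous
  have hderiv : ∀ b : ℝ, deriv Φ b
      = 2 * Real.arctan (b * r / Real.sqrt (1 + b ^ 2 * (1 - r ^ 2))) := fun b => (hD b).deriv
  have hsq : ∀ b : ℝ, 0 < Real.sqrt (1 + b ^ 2 * (1 - r ^ 2)) := by
    intro b
    apply Real.sqrt_pos.mpr
    have h : (0:ℝ) < 1 - r ^ 2 := by nlinarith
    positivity
  have hmono : MonotoneOn Φ (Set.Ici (0 : ℝ)) := by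
    apply monotoneOn_of_deriv_nonneg (convex_Ici 0) hcont.continuousOn
      (fun x _ => (hD x).differentiableAt.differentiableWithinAt)
    intro x hx
    rw [interior_Ici] at hx
    rw [hderiv x]
    have : 0 ≤ x * r / Real.sqrt (1 + x ^ 2 * (1 - r ^ 2)) :=
      div_nonneg (mul_nonneg (le_of_lt hx) hr0.le) (hsq x).le
    have h2 : Real.arctan 0 ≤ Real.arctan (x * r / Real.sqrt (1 + x ^ 2 * (1 - r ^ 2))) :=
      Real.arctan_strictMono.monotone this
    rw [Real.arctan_zero] at h2
    linarith
  have hanti : AntitoneOn Φ (Set.Iic (0 : ℝ)) := by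
    apply antitoneOn_of_deriv_nonpos (convex_Iic 0) hcont.continuousOn
      (fun x _ => (hD x).differentiableAt.differentiableWithinAt)
    intro x hx
    rw [interior_Iic] at hx
    rw [hderiv x]
    have h1 : x * r / Real.sqrt (1 + x ^ 2 * (1 - r ^ 2)) ≤ 0 :=
      div_nonpos_of_nonpos_of_nonneg (mul_nonpos_of_nonpos_of_nonneg (le_of_lt hx) hr0.le) (hsq x).le
    have h2 : Real.arctan (x * r / Real.sqrt (1 + x ^ 2 * (1 - r ^ 2))) ≤ Real.arctan 0 :=
      Real.arctan_strictMono.monotone h1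
    rw [Real.arctan_zero] at h2
    linarith
  have hzero : Φ 0 = -2 * Real.log (1 - r) := by
    rw [hΦ 0]
    norm_num [Real.sqrt_one]
  refine ⟨hmono, hanti, ?_, hzero⟩
  intro b
  rcases le_or_gt 0 b with hb | hb
  · exact hmono (Set.self_mem_Ici) hb hb
  · exact hanti hb.le (Set.self_mem_Iic) hb.le
end

section
/- Fix 0 < r < 1 and define Φ⁻(b) = log(1+b²) - 2 log(√(1 + b²(1-r²)) + r) - 2b·arctan(br/√(1 + b²(1-r²))). Then Φ⁻(b) ≤ Φ⁻(0) = -2 log(1+r) for all b ∈ ℝ. -/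
open Real

theorem phi_minus_max_at_zero (r : ℝ) (hr0 : 0 < r) (hr1 : r < 1)
    (Φ : ℝ → ℝ)
    (hΦ : ∀ b : ℝ, Φ b = Real.log (1 + b ^ 2)
        - 2 * Real.log (Real.sqrt (1 + b ^ 2 * (1 - r ^ 2)) + r)
        - 2 * b * Real.arctan (b * r / Real.sqrt (1 + b ^ 2 * (1 - r ^ 2)))) :
    (∀ b : ℝ, Φ b ≤ Φ 0) ∧ Φ 0 = -2 * Real.log (1 + r) := by
  have hΦ' : Φ = fun b : ℝ => Real.log (1 + b ^ 2)
        - 2 * Real.log (Real.sqrt (1 + b ^ 2 * (1 - r ^ 2)) + r)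
        - 2 * b * Real.arctan (b * r / Real.sqrt (1 + b ^ 2 * (1 - r ^ 2))) := funext hΦ
  subst hΦ'
  have hr2 : (0:ℝ) < 1 - r ^ 2 := by nlinarith
  -- basic facts about s
  have hspos : ∀ b : ℝ, (0:ℝ) < 1 + b ^ 2 * (1 - r ^ 2) := fun b => by nlinarith [sq_nonneg b]
  have hs1 : ∀ b : ℝ, (1:ℝ) ≤ Real.sqrt (1 + b ^ 2 * (1 - r ^ 2)) := fun b => by
    nlinarith [Real.sq_sqrt (hspos b).le, Real.sqrt_nonneg (1 + b ^ 2 * (1 - r ^ 2)), sq_nonneg b]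
  have hkey : ∀ b : ℝ, HasDerivAt (fun b : ℝ => Real.log (1 + b ^ 2)
        - 2 * Real.log (Real.sqrt (1 + b ^ 2 * (1 - r ^ 2)) + r)
        - 2 * b * Real.arctan (b * r / Real.sqrt (1 + b ^ 2 * (1 - r ^ 2))))
      (-2 * Real.arctan (b * r / Real.sqrt (1 + b ^ 2 * (1 - r ^ 2)))) b := by
    intro b
    set s := Real.sqrt (1 + b ^ 2 * (1 - r ^ 2)) with hs
    have hsp : (0:ℝ) < s := lt_of_lt_of_le one_pos (hs1 b)
    have hsne : s ≠ 0 := ne_of_gt hsp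
    have hs2 : s ^ 2 = 1 + b ^ 2 * (1 - r ^ 2) := Real.sq_sqrt (hspos b).le
    have h1b : (0:ℝ) < 1 + b ^ 2 := by positivity
    have hin : HasDerivAt (fun b : ℝ => 1 + b ^ 2 * (1 - r ^ 2)) (2 * b * (1 - r ^ 2)) b := by
      have := ((hasDerivAt_pow 2 b).mul_const (1 - r ^ 2)).const_add 1
      refine this.congr_deriv ?_
      norm_num
    have hsq : HasDerivAt (fun b : ℝ => Real.sqrt (1 + b ^ 2 * (1 - r ^ 2)))
        (2 * b * (1 - r ^ 2) / (2 * s)) b := by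
      have := hin.sqrt (by positivity)
      exact this
    have hlog1 : HasDerivAt (fun b : ℝ => Real.log (1 + b ^ 2)) (2 * b / (1 + b ^ 2)) b := by
      have h : HasDerivAt (fun b : ℝ => 1 + b ^ 2) (2 * b) b := by
        have := (hasDerivAt_pow 2 b).const_add 1
        exact this.congr_deriv (by norm_num)
      have := h.log (ne_of_gt h1b)
      exact this
    have hlog2 : HasDerivAt (fun b : ℝ => 2 * Real.log (Real.sqrt (1 + b ^ 2 * (1 - r ^ 2)) + r))
        (2 * ((2 * b * (1 - r ^ 2) / (2 * s)) / (s + r))) b := by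
      exact ((hsq.add_const r).log (by positivity)).const_mul 2
    have hg : HasDerivAt (fun b : ℝ => b * r / Real.sqrt (1 + b ^ 2 * (1 - r ^ 2)))
        ((r * s - b * r * (2 * b * (1 - r ^ 2) / (2 * s))) / s ^ 2) b := by
      have := ((hasDerivAt_id b).mul_const r).div hsq hsne
      refine this.congr_deriv ?_
      simp [← hs]
    have hat : HasDerivAt (fun b : ℝ => Real.arctan (b * r / Real.sqrt (1 + b ^ 2 * (1 - r ^ 2))))
        (1 / (1 + (b * r / s) ^ 2) * ((r * s - b * r * (2 * b * (1 - r ^ 2) / (2 * s))) / s ^ 2)) b :=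
      hg.arctan
    have hmul : HasDerivAt (fun b : ℝ => 2 * b * Real.arctan (b * r / Real.sqrt (1 + b ^ 2 * (1 - r ^ 2))))
        (2 * Real.arctan (b * r / s)
          + 2 * b * (1 / (1 + (b * r / s) ^ 2) * ((r * s - b * r * (2 * b * (1 - r ^ 2) / (2 * s))) / s ^ 2))) b := by
      have h2b : HasDerivAt (fun b : ℝ => 2 * b) 2 b := by simpa using (hasDerivAt_id b).const_mul 2
      have := h2b.mul hat
      exact this
    have total := (hlog1.sub hlog2).sub hmul
    refine total.congr_deriv ?_
    have hx2 : 1 + (b * r / s) ^ 2 = (1 + b ^ 2) / s ^ 2 := by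
      field_simp
      nlinarith [hs2]
    have hsr : (0:ℝ) < s + r := by positivity
    have hfac : r * s - b * r * (2 * b * (1 - r ^ 2) / (2 * s)) = r / s := by
      field_simp
      linear_combination hs2
    rw [hx2, hfac]
    have e2 : 2 * (2 * b * (1 - r ^ 2) / (2 * s) / (s + r)) = 2 * b * (1 - r ^ 2) / (s * (s + r)) := by
      field_simp
    have e3 : 2 * b * (1 / ((1 + b ^ 2) / s ^ 2) * (r / s / s ^ 2)) = 2 * b * r / (s * (1 + b ^ 2)) := by
      field_simp
    rw [e2, e3]
    have hzero : 2 * b / (1 + b ^ 2) - 2 * b * (1 - r ^ 2) / (s * (s + r))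
        - 2 * b * r / (s * (1 + b ^ 2)) = 0 := by
      field_simp
      linear_combination (2 * b) * hs2
    linarith [hzero]
  constructor
  · intro b
    rcases le_or_gt 0 b with hb | hb
    · have hant : AntitoneOn (fun b : ℝ => Real.log (1 + b ^ 2)
        - 2 * Real.log (Real.sqrt (1 + b ^ 2 * (1 - r ^ 2)) + r)
        - 2 * b * Real.arctan (b * r / Real.sqrt (1 + b ^ 2 * (1 - r ^ 2)))) (Set.Ici 0) := by
        apply antitoneOn_of_deriv_nonpos (convex_Ici 0)
        · exact fun x _ => ((hkey x).continuousAt).continuousWithinAt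
        · exact fun x _ => ((hkey x).differentiableAt).differentiableWithinAt
        · intro x hx
          rw [interior_Ici] at hx
          rw [(hkey x).deriv]
          have : 0 < Real.arctan (x * r / Real.sqrt (1 + x ^ 2 * (1 - r ^ 2))) := by
            have hx' : (0:ℝ) < x := hx
            have hsx := lt_of_lt_of_le one_pos (hs1 x)
            have hxpos : 0 < x * r / Real.sqrt (1 + x ^ 2 * (1 - r ^ 2)) := by positivity
            have := Real.arctan_strictMono hxpos
            simpa [Real.arctan_zero] using this
          linarith
      exact hant (Set.self_mem_Ici) hb hb
    · have hmon : MonotoneOn (fun b : ℝ => Real.log (1 + b ^ 2)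
        - 2 * Real.log (Real.sqrt (1 + b ^ 2 * (1 - r ^ 2)) + r)
        - 2 * b * Real.arctan (b * r / Real.sqrt (1 + b ^ 2 * (1 - r ^ 2)))) (Set.Iic 0) := by
        apply monotoneOn_of_deriv_nonneg (convex_Iic 0)
        · exact fun x _ => ((hkey x).continuousAt).continuousWithinAt
        · exact fun x _ => ((hkey x).differentiableAt).differentiableWithinAt
        · intro x hx
          rw [interior_Iic] at hx
          rw [(hkey x).deriv]
          have : Real.arctan (x * r / Real.sqrt (1 + x ^ 2 * (1 - r ^ 2))) < 0 := by
            have hsx := lt_of_lt_of_le one_pos (hs1 x)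
            have hxneg : x * r / Real.sqrt (1 + x ^ 2 * (1 - r ^ 2)) < 0 := by
              apply div_neg_of_neg_of_pos _ hsx
              exact mul_neg_of_neg_of_pos hx hr0
            have := Real.arctan_strictMono hxneg
            simpa [Real.arctan_zero] using this
          linarith
      exact hmon hb.le Set.self_mem_Iic hb.le
  · simp [Real.sqrt_one]
end

section
/- The union over 0 < r < 1 of the closed disks {w ∈ ℂ : |w - log(1/(1-r²))| ≤ log((1+r)/(1-r))} equals the open half-plane {w ∈ ℂ : Re w > -log 4}. -/
theorem grunsky_union :
    (⋃ r ∈ Set.Ioo (0 : ℝ) 1,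
        {w : ℂ | ‖w - (Real.log (1 / (1 - r ^ 2)) : ℂ)‖
          ≤ Real.log ((1 + r) / (1 - r))})
      = {w : ℂ | w.re > -Real.log 4} := by
  have hlog4 : Real.log 4 = 2 * Real.log 2 := by
    rw [show (4:ℝ) = 2^2 by norm_num, Real.log_pow]; push_cast; ring
  ext w
  simp only [Set.mem_iUnion, Set.mem_setOf_eq, Set.mem_Ioo, exists_prop]
  constructor
  · rintro ⟨r, ⟨hr0, hr1⟩, hw⟩
    have h1r : (0:ℝ) < 1 - r := by linarith
    have h1r' : (0:ℝ) < 1 + r := by linarith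
    have hc : Real.log (1 / (1 - r ^ 2)) = -(Real.log (1 + r) + Real.log (1 - r)) := by
      rw [one_div, Real.log_inv, show (1:ℝ) - r^2 = (1+r)*(1-r) by ring,
        Real.log_mul h1r'.ne' h1r.ne']
    have hR : Real.log ((1 + r) / (1 - r)) = Real.log (1 + r) - Real.log (1 - r) :=
      Real.log_div h1r'.ne' h1r.ne'
    have hre : (w - (Real.log (1 / (1 - r ^ 2)) : ℂ)).re
        = w.re + (Real.log (1 + r) + Real.log (1 - r)) := by
      rw [hc]; simp [Complex.sub_re]; ring
    have habs := Complex.abs_re_le_norm (w - (Real.log (1 / (1 - r ^ 2)) : ℂ))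
    have h2 := abs_le.mp (habs.trans hw)
    rw [hre, hR] at h2
    have hl1 : Real.log (1 + r) < Real.log 2 := Real.log_lt_log h1r' (by linarith)
    linarith [h2.1]
  · intro hw
    set x := w.re with hx
    set y := w.im with hy
    have ha : 0 < x + Real.log 4 := by linarith
    set a := x + Real.log 4 with hadef
    set B := (x + 2 * y ^ 2 / a) / 2 with hBdef
    set r := max (1/2 : ℝ) (max (2 * Real.exp (-a/4) - 1) (1 - Real.exp (-B))) with hrdef
    have hr0 : (0:ℝ) < r := lt_of_lt_of_le (by norm_num) (le_max_left _ _)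
    have hr1 : r < 1 := by
      apply max_lt (by norm_num)
      apply max_lt
      · have : Real.exp (-a/4) < 1 := Real.exp_lt_one_iff.mpr (by linarith)
        linarith
      · have : 0 < Real.exp (-B) := Real.exp_pos _
        linarith
    have h1r : (0:ℝ) < 1 - r := by linarith
    have h1r' : (0:ℝ) < 1 + r := by linarith
    refine ⟨r, ⟨hr0, hr1⟩, ?_⟩
    set l1 := Real.log (1 + r) with hl1def
    set l2 := Real.log (1 - r) with hl2def
    have hc : Real.log (1 / (1 - r ^ 2)) = -(l1 + l2) := by
      rw [hl1def, hl2def, one_div, Real.log_inv, show (1:ℝ) - r^2 = (1+r)*(1-r) by ring,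
        Real.log_mul h1r'.ne' h1r.ne']
    have hR : Real.log ((1 + r) / (1 - r)) = l1 - l2 := Real.log_div h1r'.ne' h1r.ne'
    -- key inequality 1 : x + 2*l1 ≥ a/2
    have hkey1 : a / 2 ≤ x + 2 * l1 := by
      have hr2 : 2 * Real.exp (-a/4) - 1 ≤ r :=
        le_trans (le_max_left _ _) (le_max_right _ _)
      have h1 : 2 * Real.exp (-a/4) ≤ 1 + r := by linarith
      have h2 : Real.log (2 * Real.exp (-a/4)) ≤ l1 :=
        Real.log_le_log (by positivity) h1
      rw [Real.log_mul (by norm_num) (Real.exp_ne_zero _), Real.log_exp] at h2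
      have : a = x + Real.log 4 := hadef
      linarith [hlog4 ▸ this]
    -- key inequality 2 : -2*l2 - x ≥ 2*y^2/a
    have hkey2 : 2 * y ^ 2 / a ≤ -2 * l2 - x := by
      have hr2 : 1 - Real.exp (-B) ≤ r :=
        le_trans (le_max_right _ _) (le_max_right _ _)
      have h1 : 1 - r ≤ Real.exp (-B) := by linarith
      have h2 : l2 ≤ -B := by
        have := Real.log_le_log h1r h1
        rwa [Real.log_exp] at this
      have : x + 2 * y ^ 2 / a = 2 * B := by rw [hBdef]; ring
      linarith
    have hy2a : 0 ≤ 2 * y ^ 2 / a := by positivity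
    have hprod : y ^ 2 ≤ (x + 2 * l1) * (-2 * l2 - x) := by
      have h := mul_le_mul hkey1 hkey2 hy2a (by linarith)
      have heq : (a / 2) * (2 * y ^ 2 / a) = y ^ 2 := by
        field_simp
      linarith [h, heq ▸ h]
    -- conclude
    have hre : (w - (Real.log (1 / (1 - r ^ 2)) : ℂ)).re = x + (l1 + l2) := by
      rw [hc]; simp [Complex.sub_re]; ring
    have him : (w - (Real.log (1 / (1 - r ^ 2)) : ℂ)).im = y := by
      simp [Complex.sub_im]; rfl
    have hR0 : 0 ≤ l1 - l2 := by
      have h1 : 0 ≤ l1 := Real.log_nonneg (by linarith)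
      have h2 : l2 ≤ 0 := Real.log_nonpos (by linarith) (by linarith)
      linarith
    rw [hR, Complex.norm_def]
    have hns : Complex.normSq (w - (Real.log (1 / (1 - r ^ 2)) : ℂ)) ≤ (l1 - l2) ^ 2 := by
      rw [Complex.normSq_apply, hre, him]
      nlinarith [hprod]
    calc Real.sqrt (Complex.normSq (w - (Real.log (1 / (1 - r ^ 2)) : ℂ)))
        ≤ Real.sqrt ((l1 - l2) ^ 2) := Real.sqrt_le_sqrt hns
      _ = l1 - l2 := Real.sqrt_sq hR0
end

section
/- Let p(b) = -(1/2)·log(2(5 - 4b² + 3√(1-8b²))/(1+b²)) - b·arctan(3b/√(1-8b²)) and q(b) = -log(2/√(1+b²)) - b(arctan b + π), defined for 0 ≤ b < 1/(2√2). Then q(b) - p(b) is strictly decreasing on (0, 1/(2√2)), with derivative q'(b) - p'(b) = (24b² - 3 + (4b² - 5)√(1-8b²))·(π + arctan b - arctan(3b/√(1-8b²))) / (√(1-8b²)(5 - 4b² + 3√(1-8b²))) < 0. -/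
open Real

private theorem aux_deriv (x : ℝ) (hx0 : 0 < x) (h8 : 0 < 1 - 8*x^2) :
    HasDerivAt (fun b : ℝ =>
      (-Real.log (2 / Real.sqrt (1 + b ^ 2)) - b * (Real.arctan b + Real.pi))
      - (-(1/2) * Real.log (2 * (5 - 4 * b ^ 2 + 3 * Real.sqrt (1 - 8 * b ^ 2)) / (1 + b ^ 2))
          - b * Real.arctan (3 * b / Real.sqrt (1 - 8 * b ^ 2))))
    (-(Real.pi + Real.arctan x - Real.arctan (3 * x / Real.sqrt (1 - 8 * x ^ 2)))) x := by
  have hs : 0 < Real.sqrt (1 - 8*x^2) := Real.sqrt_pos.mpr h8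
  have hs2 : Real.sqrt (1 - 8*x^2)^2 = 1 - 8*x^2 := Real.sq_sqrt h8.le
  set s := Real.sqrt (1 - 8*x^2) with hsdef
  have hA : 0 < 5 - 4*x^2 + 3*s := by nlinarith [hs.le]
  have hA' : 5 - 4*x^2 + s*3 ≠ 0 := by linarith
  have hA'' : 5 - x^2*4 + s*3 ≠ 0 := by linarith
  have hA''' : 5 - x^2*4 + 3*s ≠ 0 := by linarith
  have h1b : (0:ℝ) < 1 + x^2 := by positivity
  have ht : 0 < Real.sqrt (1 + x^2) := Real.sqrt_pos.mpr h1b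
  have ht2 : Real.sqrt (1 + x^2)^2 = 1 + x^2 := Real.sq_sqrt h1b.le
  set t := Real.sqrt (1 + x^2) with htdef
  have d1 : HasDerivAt (fun b : ℝ => 1 + b^2) (2*x) x := by
    simpa using (hasDerivAt_pow 2 x).const_add 1
  have d2 : HasDerivAt (fun b : ℝ => Real.sqrt (1+b^2)) (2*x/(2*t)) x :=
    d1.sqrt (by positivity)
  -- q part piece 1
  have d4 : HasDerivAt (fun b : ℝ => Real.log (2/Real.sqrt (1+b^2))) (-x/(1+x^2)) x := by
    have := ((hasDerivAt_const x (2:ℝ)).div d2 ht.ne').log (by show (2:ℝ) / Real.sqrt (1+x^2) ≠ 0; positivity)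
    refine this.congr_deriv (Eq.symm ?_)
    simp only [Pi.div_apply]
    rw [← htdef, ← ht2]
    field_simp
    ring
  -- q part piece 2
  have d5 : HasDerivAt (fun b : ℝ => b*(Real.arctan b + Real.pi))
      (Real.arctan x + Real.pi + x/(1+x^2)) x := by
    have := (hasDerivAt_id x).mul ((Real.hasDerivAt_arctan x).add_const Real.pi)
    refine this.congr_deriv (Eq.symm ?_)
    simp [id]
    ring
  have qpart := d4.neg.sub d5
  -- p part
  have e1 : HasDerivAt (fun b : ℝ => 1 - 8*b^2) (-16*x) x := by
    have := ((hasDerivAt_pow 2 x).const_mul (8:ℝ)).const_sub 1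
    refine this.congr_deriv (Eq.symm ?_)
    ring
  have e2 : HasDerivAt (fun b : ℝ => Real.sqrt (1-8*b^2)) (-16*x/(2*s)) x :=
    e1.sqrt h8.ne'
  have e3 : HasDerivAt (fun b : ℝ => 5 - 4*b^2 + 3*Real.sqrt (1-8*b^2))
      (-8*x - 24*x/s) x := by
    have h1 : HasDerivAt (fun b : ℝ => 5 - 4*b^2) (-8*x) x := by
      have := ((hasDerivAt_pow 2 x).const_mul (4:ℝ)).const_sub 5
      refine this.congr_deriv (Eq.symm ?_); ring
    have := h1.add (e2.const_mul 3)
    refine this.congr_deriv (Eq.symm ?_)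
    field_simp
    ring
  have hu : 2*(5 - 4*x^2 + 3*s)/(1+x^2) ≠ 0 := by
    have : 0 < 2*(5 - 4*x^2 + 3*s)/(1+x^2) := by positivity
    exact this.ne'
  have e6 : HasDerivAt
      (fun b : ℝ => Real.log (2 * (5 - 4 * b ^ 2 + 3 * Real.sqrt (1 - 8 * b ^ 2)) / (1 + b ^ 2)))
      ((-8*x - 24*x/s)/(5 - 4*x^2 + 3*s) - 2*x/(1+x^2)) x := by
    have := ((e3.const_mul (2:ℝ)).div d1 h1b.ne').log hu
    refine this.congr_deriv (Eq.symm ?_)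
    simp only [Pi.div_apply]
    rw [← hsdef]
    field_simp
  have e7 := ((hasDerivAt_id x).const_mul (3:ℝ)).div e2 hs.ne'
  have e9 : HasDerivAt (fun b : ℝ => b * Real.arctan (3*b/Real.sqrt (1-8*b^2)))
      (Real.arctan (3*x/s) + 3*x/(s*(1+x^2))) x := by
    have := (hasDerivAt_id x).mul e7.arctan
    refine this.congr_deriv (Eq.symm ?_)
    simp only [Pi.div_apply]
    rw [← hsdef]
    simp only [id_eq]
    have hv : 1 + (3*x/s)^2 = (1+x^2)/s^2 := by
      field_simp
      linarith [hs2]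
    rw [hv]
    field_simp
    linear_combination (-6*x) * hs2
  have ppart := (e6.const_mul (-(1/2 : ℝ))).sub e9
  have total := qpart.sub ppart
  refine total.congr_deriv (Eq.symm ?_)
  field_simp
  ring_nf
  linear_combination (6*x) * hs2

theorem q_sub_p_strict_anti
    (p q : ℝ → ℝ)
    (hp : ∀ b : ℝ, p b = -(1/2) * Real.log (2 * (5 - 4 * b ^ 2
        + 3 * Real.sqrt (1 - 8 * b ^ 2)) / (1 + b ^ 2))
        - b * Real.arctan (3 * b / Real.sqrt (1 - 8 * b ^ 2)))
    (hq : ∀ b : ℝ, q b = -Real.log (2 / Real.sqrt (1 + b ^ 2))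
        - b * (Real.arctan b + Real.pi)) :
    StrictAntiOn (fun b => q b - p b) (Set.Ioo 0 (1 / (2 * Real.sqrt 2))) ∧
    ∀ b ∈ Set.Ioo (0 : ℝ) (1 / (2 * Real.sqrt 2)),
      HasDerivAt (fun b => q b - p b)
        ((24 * b ^ 2 - 3 + (4 * b ^ 2 - 5) * Real.sqrt (1 - 8 * b ^ 2))
          * (Real.pi + Real.arctan b - Real.arctan (3 * b / Real.sqrt (1 - 8 * b ^ 2)))
          / (Real.sqrt (1 - 8 * b ^ 2) * (5 - 4 * b ^ 2 + 3 * Real.sqrt (1 - 8 * b ^ 2))))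
        b ∧
      (24 * b ^ 2 - 3 + (4 * b ^ 2 - 5) * Real.sqrt (1 - 8 * b ^ 2))
          * (Real.pi + Real.arctan b - Real.arctan (3 * b / Real.sqrt (1 - 8 * b ^ 2)))
          / (Real.sqrt (1 - 8 * b ^ 2) * (5 - 4 * b ^ 2 + 3 * Real.sqrt (1 - 8 * b ^ 2)))
        < 0 := by
  have hfun : (fun b => q b - p b) = (fun b : ℝ =>
      (-Real.log (2 / Real.sqrt (1 + b ^ 2)) - b * (Real.arctan b + Real.pi))
      - (-(1/2) * Real.log (2 * (5 - 4 * b ^ 2 + 3 * Real.sqrt (1 - 8 * b ^ 2)) / (1 + b ^ 2))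
          - b * Real.arctan (3 * b / Real.sqrt (1 - 8 * b ^ 2)))) := by
    funext b; rw [hp, hq]
  have hmain : ∀ b ∈ Set.Ioo (0 : ℝ) (1 / (2 * Real.sqrt 2)),
      HasDerivAt (fun b => q b - p b)
        ((24 * b ^ 2 - 3 + (4 * b ^ 2 - 5) * Real.sqrt (1 - 8 * b ^ 2))
          * (Real.pi + Real.arctan b - Real.arctan (3 * b / Real.sqrt (1 - 8 * b ^ 2)))
          / (Real.sqrt (1 - 8 * b ^ 2) * (5 - 4 * b ^ 2 + 3 * Real.sqrt (1 - 8 * b ^ 2))))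
        b ∧
      (24 * b ^ 2 - 3 + (4 * b ^ 2 - 5) * Real.sqrt (1 - 8 * b ^ 2))
          * (Real.pi + Real.arctan b - Real.arctan (3 * b / Real.sqrt (1 - 8 * b ^ 2)))
          / (Real.sqrt (1 - 8 * b ^ 2) * (5 - 4 * b ^ 2 + 3 * Real.sqrt (1 - 8 * b ^ 2)))
        < 0 := by
    rintro b ⟨hb1, hb2⟩
    have h2p : 0 < Real.sqrt 2 := Real.sqrt_pos.mpr two_pos
    have h2 : Real.sqrt 2 ^ 2 = 2 := Real.sq_sqrt (by norm_num)
    have hb2' : b * (2 * Real.sqrt 2) < 1 := (lt_div_iff₀ (by positivity)).mp hb2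
    have h8 : 0 < 1 - 8 * b ^ 2 := by nlinarith [mul_pos hb1 (mul_pos two_pos h2p)]
    have hs : 0 < Real.sqrt (1 - 8*b^2) := Real.sqrt_pos.mpr h8
    have hs2 : Real.sqrt (1 - 8*b^2)^2 = 1 - 8*b^2 := Real.sq_sqrt h8.le
    set s := Real.sqrt (1 - 8*b^2) with hsdef
    have hA : 0 < 5 - 4*b^2 + 3*s := by nlinarith [hs.le]
    have hA' : 5 - 4*b^2 + s*3 ≠ 0 := by linarith
    have hT : 0 < Real.pi + Real.arctan b - Real.arctan (3 * b / s) := by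
      have h1 := Real.arctan_lt_pi_div_two (3 * b / s)
      have h2 : (0:ℝ) < Real.arctan b := by
        have := Real.arctan_strictMono hb1
        simpa [Real.arctan_zero] using this
      linarith [Real.pi_pos]
    have hN : 24 * b ^ 2 - 3 + (4 * b ^ 2 - 5) * s = -(s * (5 - 4 * b ^ 2 + 3 * s)) := by
      linear_combination 3 * hs2
    have hVeq : (24 * b ^ 2 - 3 + (4 * b ^ 2 - 5) * s)
          * (Real.pi + Real.arctan b - Real.arctan (3 * b / s))
          / (s * (5 - 4 * b ^ 2 + 3 * s))
        = -(Real.pi + Real.arctan b - Real.arctan (3 * b / s)) := by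
      rw [hN]
      field_simp
    constructor
    · rw [hfun, hVeq]
      exact aux_deriv b hb1 h8
    · rw [hVeq]
      linarith
  refine ⟨?_, hmain⟩
  have hconv : Convex ℝ (Set.Ioo (0:ℝ) (1 / (2 * Real.sqrt 2))) := convex_Ioo _ _
  apply strictAntiOn_of_deriv_neg hconv
  · intro x hx
    exact ((hmain x hx).1).differentiableAt.continuousAt.continuousWithinAt
  · intro x hx
    rw [interior_Ioo] at hx
    rw [(hmain x hx).1.deriv]
    exact (hmain x hx).2
end

section
/- With p, q as defined (p(b) = -(1/2)·log(2(5-4b²+3√(1-8b²))/(1+b²)) - b·arctan(3b/√(1-8b²)), q(b) = -log(2/√(1+b²)) - b(arctan b + π) for 0 ≤ b < 1/(2√2)), one has q(0) - p(0) = log 2 > 0 and lim_{b→(1/(2√2))⁻}(q(b) - p(b)) = log(3/2) - (1/(2√2))(arctan(1/(2√2)) + π/2) < 0. Consequently there exists a unique b₀ ∈ (0, 1/(2√2)) with p(b₀) = q(b₀). -/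
open Real Filter Set

noncomputable def Fb (b : ℝ) : ℝ :=
  Real.log ((Real.sqrt (1 - 8*b^2) + 3)/2)
    + b * (Real.arctan (3*b / Real.sqrt (1 - 8*b^2)) - Real.arctan b - Real.pi)

lemma Fb_zero : Fb 0 = Real.log 2 := by
  simp [Fb]
  norm_num

lemma Fb_contAt (x : ℝ) (hx : 8*x^2 < 1) : ContinuousAt Fb x := by
  have hs : 0 < Real.sqrt (1 - 8*x^2) := Real.sqrt_pos.2 (by linarith)
  have hcs : ContinuousAt (fun b : ℝ => Real.sqrt (1 - 8*b^2)) x :=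
    (Real.continuous_sqrt.comp (by continuity)).continuousAt
  have h1 : ContinuousAt (fun b : ℝ => Real.log ((Real.sqrt (1 - 8*b^2) + 3)/2)) x :=
    ContinuousAt.log (by fun_prop) (by positivity)
  have h2 : ContinuousAt (fun b : ℝ => Real.arctan (3*b / Real.sqrt (1 - 8*b^2))) x :=
    Real.continuous_arctan.continuousAt.comp
      (ContinuousAt.div (by fun_prop) hcs hs.ne')
  exact h1.add (continuousAt_id.mul ((h2.sub Real.continuous_arctan.continuousAt).sub
    continuousAt_const))

lemma Fb_hasDeriv (x : ℝ) (hx : 8*x^2 < 1) :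
    HasDerivAt Fb
      (Real.arctan (3*x / Real.sqrt (1 - 8*x^2)) - Real.arctan x - Real.pi) x := by
  set s := Real.sqrt (1 - 8*x^2) with hsdef
  have hs : 0 < s := Real.sqrt_pos.2 (by linarith)
  have hs2 : s^2 = 1 - 8*x^2 := Real.sq_sqrt (by linarith)
  have hne : (1:ℝ) - 8*x^2 ≠ 0 := by linarith
  have h1 : HasDerivAt (fun b : ℝ => 1 - 8*b^2) (-(16*x)) x := by
    have := (hasDerivAt_const x (1:ℝ)).sub ((hasDerivAt_pow 2 x).const_mul (8:ℝ))
    refine this.congr_deriv ?_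
    simp; ring
  have hsq : HasDerivAt (fun b : ℝ => Real.sqrt (1 - 8*b^2)) (-(16*x)/(2*s)) x :=
    h1.sqrt hne
  have hlog : HasDerivAt (fun b : ℝ => Real.log ((Real.sqrt (1 - 8*b^2) + 3)/2))
      ((-(16*x)/(2*s)/2)/((s+3)/2)) x :=
    HasDerivAt.log ((hsq.add_const 3).div_const 2) (by positivity)
  have hdiv : HasDerivAt (fun b : ℝ => 3*b / Real.sqrt (1 - 8*b^2))
      ((3*s - 3*x*(-(16*x)/(2*s)))/s^2) x := by
    have h3 : HasDerivAt (fun b : ℝ => 3*b) 3 x := by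
      simpa using (hasDerivAt_id x).const_mul (3:ℝ)
    exact h3.div hsq hs.ne'
  have harc : HasDerivAt (fun b : ℝ => Real.arctan (3*b / Real.sqrt (1 - 8*b^2)))
      (1/(1+(3*x/s)^2) * ((3*s - 3*x*(-(16*x)/(2*s)))/s^2)) x := hdiv.arctan
  have hmul : HasDerivAt (fun b : ℝ => b * (Real.arctan (3*b / Real.sqrt (1 - 8*b^2))
      - Real.arctan b - Real.pi))
      (1 * (Real.arctan (3*x/s) - Real.arctan x - Real.pi)
        + x * (1/(1+(3*x/s)^2) * ((3*s - 3*x*(-(16*x)/(2*s)))/s^2) - 1/(1+x^2))) x := by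
    have := (hasDerivAt_id' (𝕜 := ℝ) x).mul
      (((harc.sub (Real.hasDerivAt_arctan x)).sub_const Real.pi))
    refine this.congr_deriv ?_
    rfl
  have total := hlog.add hmul
  have hFb : Fb = fun b => Real.log ((Real.sqrt (1 - 8*b^2) + 3)/2)
    + b * (Real.arctan (3*b / Real.sqrt (1 - 8*b^2)) - Real.arctan b - Real.pi) := rfl
  rw [hFb]
  refine total.congr_deriv ?_
  have h9 : 1 + (3*x/s)^2 = (1+x^2)/s^2 := by
    field_simp
    nlinarith [hs2]
  rw [h9]
  have hx2 : (0:ℝ) < 1 + x^2 := by positivity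
  field_simp
  linear_combination (6*x*s + 16*x) * hs2

lemma Fb_eq (b : ℝ) (hb2 : 8*b^2 < 1) :
    -Real.log (2 / Real.sqrt (1 + b ^ 2)) - b * (Real.arctan b + Real.pi)
    - (-(1/2) * Real.log (2 * (5 - 4 * b ^ 2
        + 3 * Real.sqrt (1 - 8 * b ^ 2)) / (1 + b ^ 2))
        - b * Real.arctan (3 * b / Real.sqrt (1 - 8 * b ^ 2))) = Fb b := by
  set s := Real.sqrt (1 - 8*b^2) with hsdef
  have hs : 0 < s := Real.sqrt_pos.2 (by linarith)
  have hs2 : s^2 = 1 - 8*b^2 := Real.sq_sqrt (by linarith)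
  have hb1 : (0:ℝ) < 1 + b^2 := by positivity
  have key : 2 * (5 - 4*b^2 + 3*s) / (1 + b^2) = (s+3)^2 / (1+b^2) := by
    rw [show 2 * (5 - 4*b^2 + 3*s) = (s+3)^2 by nlinarith [hs2]]
  have e1 : Real.log (2 * (5 - 4*b^2 + 3*s) / (1 + b^2))
      = 2 * Real.log (s+3) - Real.log (1+b^2) := by
    rw [key, Real.log_div (by positivity) (by positivity), Real.log_pow]
    push_cast; ring
  have e2 : Real.log (2 / Real.sqrt (1 + b^2)) = Real.log 2 - Real.log (1+b^2) / 2 := by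
    rw [Real.log_div (by norm_num) (by positivity), Real.log_sqrt (by positivity)]
  have e3 : Real.log ((s+3)/2) = Real.log (s+3) - Real.log 2 := by
    rw [Real.log_div (by positivity) (by norm_num)]
  rw [Fb]
  rw [e1, e2, e3]
  ring

lemma c_sq : (1 / (2 * Real.sqrt 2))^2 = 1/8 := by
  rw [div_pow, mul_pow, Real.sq_sqrt (by norm_num : (2:ℝ) ≥ 0)]
  norm_num

lemma c_pos : (0:ℝ) < 1 / (2 * Real.sqrt 2) := by positivity

lemma c_gt_third : (1:ℝ)/3 < 1 / (2 * Real.sqrt 2) := by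
  have h : Real.sqrt 2 < 3/2 := by
    rw [show (3/2:ℝ) = Real.sqrt ((3/2)^2) by rw [Real.sqrt_sq]; norm_num]
    exact Real.sqrt_lt_sqrt (by norm_num) (by norm_num)
  have h2 : (0:ℝ) < Real.sqrt 2 := by positivity
  rw [div_lt_div_iff₀ (by norm_num) (by positivity)]
  nlinarith

lemma L_neg : Real.log (3 / 2)
    - (1 / (2 * Real.sqrt 2)) * (Real.arctan (1 / (2 * Real.sqrt 2)) + Real.pi / 2) < 0 := by
  have h1 : Real.log (3/2) < 1/2 := by
    have := Real.log_lt_sub_one_of_pos (x := 3/2) (by norm_num) (by norm_num)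
    linarith
  have h2 : (0:ℝ) < Real.arctan (1 / (2 * Real.sqrt 2)) := by
    rw [← Real.arctan_zero]
    exact Real.arctan_strictMono c_pos
  have h3 := Real.pi_gt_three
  nlinarith [c_gt_third, c_pos]

lemma Fb_tendsto : Filter.Tendsto Fb
    (nhdsWithin (1 / (2 * Real.sqrt 2)) (Set.Iio (1 / (2 * Real.sqrt 2))))
    (nhds (Real.log (3 / 2)
      - (1 / (2 * Real.sqrt 2)) * (Real.arctan (1 / (2 * Real.sqrt 2)) + Real.pi / 2))) := by
  set c := 1 / (2 * Real.sqrt 2) with hc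
  have hc8 : 8 * c^2 = 1 := by rw [hc, c_sq]; norm_num
  have hcpos : 0 < c := c_pos
  have hcont : Continuous (fun b : ℝ => Real.sqrt (1 - 8*b^2)) :=
    Real.continuous_sqrt.comp (by continuity)
  have hsc : Tendsto (fun b : ℝ => Real.sqrt (1 - 8*b^2)) (nhdsWithin c (Iio c)) (nhds 0) := by
    have := hcont.tendsto c
    rw [show Real.sqrt (1 - 8*c^2) = 0 by
      rw [show 1 - 8*c^2 = 0 by linarith, Real.sqrt_zero]] at this
    exact this.mono_left nhdsWithin_le_nhds
  have hmem : Ioo (0:ℝ) c ∈ nhdsWithin c (Iio c) :=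
    Ioo_mem_nhdsLT_of_mem ⟨hcpos, le_refl c⟩
  have t1 : Tendsto (fun b : ℝ => Real.log ((Real.sqrt (1 - 8*b^2) + 3)/2))
      (nhdsWithin c (Iio c)) (nhds (Real.log (3/2))) := by
    have h : Tendsto (fun b : ℝ => (Real.sqrt (1 - 8*b^2) + 3)/2)
        (nhdsWithin c (Iio c)) (nhds ((0+3)/2)) := ((hsc.add_const 3).div_const 2)
    have := (Real.continuousAt_log (by norm_num : ((0:ℝ)+3)/2 ≠ 0)).tendsto.comp h
    norm_num at this ⊢
    exact this
  have hden : Tendsto (fun b : ℝ => Real.sqrt (1 - 8*b^2)) (nhdsWithin c (Iio c))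
      (nhdsWithin 0 (Ioi 0)) := by
    rw [tendsto_nhdsWithin_iff]
    refine ⟨hsc, ?_⟩
    filter_upwards [hmem] with b hb
    have : 8*b^2 < 1 := by nlinarith [hb.1, hb.2, hc8]
    exact Real.sqrt_pos.2 (by linarith)
  have hfrac : Tendsto (fun b : ℝ => 3*b / Real.sqrt (1 - 8*b^2))
      (nhdsWithin c (Iio c)) atTop := by
    simp only [div_eq_mul_inv]
    refine Tendsto.pos_mul_atTop (by positivity : (0:ℝ) < 3*c) ?_ ?_
    · exact ((continuous_const.mul continuous_id).tendsto c).mono_left nhdsWithin_le_nhds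
    · exact tendsto_inv_nhdsGT_zero.comp hden
  have t2 : Tendsto (fun b : ℝ => Real.arctan (3*b / Real.sqrt (1 - 8*b^2)))
      (nhdsWithin c (Iio c)) (nhds (Real.pi/2)) :=
    (Real.tendsto_arctan_atTop.mono_right nhdsWithin_le_nhds).comp hfrac
  have t3 : Tendsto (fun b : ℝ => Real.arctan b) (nhdsWithin c (Iio c))
      (nhds (Real.arctan c)) :=
    (Real.continuous_arctan.tendsto c).mono_left nhdsWithin_le_nhds
  have tid : Tendsto (fun b : ℝ => b) (nhdsWithin c (Iio c)) (nhds c) :=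
    (continuous_id.tendsto c).mono_left nhdsWithin_le_nhds
  have total := t1.add (tid.mul ((t2.sub t3).sub_const Real.pi))
  have hval : Real.log (3/2) - c * (Real.arctan c + Real.pi/2)
      = Real.log (3/2) + c * (Real.pi/2 - Real.arctan c - Real.pi) := by ring
  rw [hval]
  exact total

lemma Fb_strictAnti : StrictAntiOn Fb (Set.Ico 0 (1 / (2 * Real.sqrt 2))) := by
  have hc8 : 8 * (1 / (2 * Real.sqrt 2))^2 = 1 := by rw [c_sq]; norm_num
  have hsub : ∀ x ∈ Set.Ico (0:ℝ) (1 / (2 * Real.sqrt 2)), 8*x^2 < 1 := by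
    intro x hx
    nlinarith [hx.1, hx.2]
  apply strictAntiOn_of_deriv_neg (convex_Ico _ _)
  · exact fun x hx => (Fb_contAt x (hsub x hx)).continuousWithinAt
  · intro x hx
    rw [interior_Ico] at hx
    have h8 : 8*x^2 < 1 := hsub x ⟨hx.1.le, hx.2⟩
    rw [(Fb_hasDeriv x h8).deriv]
    have h1 := Real.arctan_lt_pi_div_two (3*x / Real.sqrt (1 - 8*x^2))
    have h2 := Real.neg_pi_div_two_lt_arctan x
    linarith

theorem exists_unique_b0
    (p q : ℝ → ℝ)
    (hp : ∀ b : ℝ, p b = -(1/2) * Real.log (2 * (5 - 4 * b ^ 2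
        + 3 * Real.sqrt (1 - 8 * b ^ 2)) / (1 + b ^ 2))
        - b * Real.arctan (3 * b / Real.sqrt (1 - 8 * b ^ 2)))
    (hq : ∀ b : ℝ, q b = -Real.log (2 / Real.sqrt (1 + b ^ 2))
        - b * (Real.arctan b + Real.pi)) :
    q 0 - p 0 = Real.log 2 ∧ (0 : ℝ) < Real.log 2 ∧
    Filter.Tendsto (fun b => q b - p b)
      (nhdsWithin (1 / (2 * Real.sqrt 2)) (Set.Iio (1 / (2 * Real.sqrt 2))))
      (nhds (Real.log (3 / 2)
        - (1 / (2 * Real.sqrt 2)) * (Real.arctan (1 / (2 * Real.sqrt 2)) + Real.pi / 2))) ∧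
    Real.log (3 / 2)
        - (1 / (2 * Real.sqrt 2)) * (Real.arctan (1 / (2 * Real.sqrt 2)) + Real.pi / 2) < 0 ∧
    ∃! b₀ : ℝ, b₀ ∈ Set.Ioo 0 (1 / (2 * Real.sqrt 2)) ∧ p b₀ = q b₀ := by
  set c := 1 / (2 * Real.sqrt 2) with hc
  have hc8 : 8 * c^2 = 1 := by rw [hc, c_sq]; norm_num
  have hcpos : 0 < c := c_pos
  have key : ∀ b : ℝ, 8*b^2 < 1 → q b - p b = Fb b := by
    intro b hb
    rw [hp b, hq b]
    exact Fb_eq b hb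
  have key' : ∀ b ∈ Set.Ico (0:ℝ) c, q b - p b = Fb b := by
    intro b hb
    exact key b (by nlinarith [hb.1, hb.2])
  refine ⟨?_, Real.log_pos (by norm_num), ?_, L_neg, ?_⟩
  · rw [key 0 (by norm_num), Fb_zero]
  · refine Fb_tendsto.congr' ?_
    filter_upwards [Ioo_mem_nhdsLT_of_mem (⟨hcpos, le_refl c⟩ : c ∈ Set.Ioc 0 c)] with b hb
    exact (key b (by nlinarith [hb.1, hb.2])).symm
  · -- existence and uniqueness
    have hlogpos : (0:ℝ) < Real.log 2 := Real.log_pos (by norm_num)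
    -- find b₁ with Fb b₁ < 0
    have hev : ∀ᶠ b in nhdsWithin c (Set.Iio c), Fb b < 0 :=
      Fb_tendsto.eventually_lt_const L_neg
    have hev2 : ∀ᶠ b in nhdsWithin c (Set.Iio c), b ∈ Set.Ioo 0 c :=
      eventually_of_mem (Ioo_mem_nhdsLT_of_mem ⟨hcpos, le_refl c⟩) (fun _ h => h)
    obtain ⟨b₁, hb₁neg, hb₁mem⟩ := (hev.and hev2).exists
    have hb₁0 : 0 < b₁ := hb₁mem.1
    have hb₁c : b₁ < c := hb₁mem.2
    -- IVT on [0, b₁]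
    have hcont : ContinuousOn Fb (Set.Icc 0 b₁) := by
      intro x hx
      have : 8*x^2 < 1 := by nlinarith [hx.1, hx.2]
      exact (Fb_contAt x this).continuousWithinAt
    have hivt := intermediate_value_Ioo' hb₁0.le hcont
    have h0mem : (0:ℝ) ∈ Set.Ioo (Fb b₁) (Fb 0) := by
      rw [Fb_zero]; exact ⟨hb₁neg, hlogpos⟩
    obtain ⟨b₀, hb₀mem, hb₀val⟩ := hivt h0mem
    have hb₀Ioo : b₀ ∈ Set.Ioo 0 c := ⟨hb₀mem.1, hb₀mem.2.trans hb₁c⟩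
    refine ⟨b₀, ⟨hb₀Ioo, ?_⟩, ?_⟩
    · have := key' b₀ ⟨hb₀Ioo.1.le, hb₀Ioo.2⟩
      rw [hb₀val] at this
      linarith
    · rintro y ⟨hyIoo, hy⟩
      have hFy : Fb y = 0 := by
        have := key' y ⟨hyIoo.1.le, hyIoo.2⟩
        rw [hy] at this
        linarith
      have hFb₀ : Fb b₀ = 0 := hb₀val
      exact Fb_strictAnti.injOn ⟨hyIoo.1.le, hyIoo.2⟩ ⟨hb₀Ioo.1.le, hb₀Ioo.2⟩
        (by rw [hFy, hFb₀])
end
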